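/- (Corollary 2(i)) Suppose c₁ = c₂ = 0, suppose d₁,ₘ ≠ 0 and d₂,ₘ ≠ 0 for all m, and suppose the controllers u₃, u₄ are chosen as u₃,ₘ(t) = d₁,ₘ⁻¹ a₁,ᵢ₍ₘ₎ f₁,ᵢ₍ₘ₎(x₁(t)) + d₁,ₘ⁻¹ b₁,ⱼ₍ₘ₎ g₁,ⱼ₍ₘ₎(y₁(t)) − k₁,ₘ(w₁(t)) + d₁,ₘ⁻¹ e₁ₘ(t) and u₄,ₘ(t) = d₂,ₘ⁻¹ a₂,ᵢ₍ₘ₎ f₂,ᵢ₍ₘ₎(x₂(t)) + d₂,ₘ⁻¹ b₂,ⱼ₍ₘ₎ g₂,ⱼ₍ₘ₎(y₂(t)) − k₂,ₘ(w₂(t)) + d₂,ₘ⁻¹ e₂ₘ(t), where here e₁ₘ(t) = a₁,ᵢ₍ₘ₎ x₁,ᵢ₍ₘ₎(t) + b₁,ⱼ₍ₘ₎ y₁,ⱼ₍ₘ₎(t) − d₁,ₘ w₁,ₘ(t) and e₂ₘ(t) = a₂,ᵢ₍ₘ₎ x₂,ᵢ₍ₘ₎(t) + b₂,ⱼ₍ₘ₎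 y₂,ⱼ₍ₘ₎(t) − d₂,ₘ w₂,ₘ(t). Then for every m, e₁ₘ(t) → 0 and e₂ₘ(t) → 0 as t → ∞; that is, the four drive systems achieve dual combination multi-switching synchronization with the response systems w₁' = k₁(w₁) + u₃ and w₂' = k₂(w₂) + u₄. -/

import Mathlib

open Filter Topology

lemma tendsto_zero_of_deriv_neg_self (e : ℝ → ℝ)
    (h : ∀ t, HasDerivAt e (-(e t)) t) : Tendsto e atTop (𝓝 0) := by
  have hF : ∀ t, HasDerivAt (fun s => e s * Real.exp s) 0 t := by
    intro t
    have := (h t).mul (Real.hasDerivAt_exp t)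
    exact this.congr_deriv (by ring)
  have hconst : ∀ t, e t * Real.exp t = e 0 * Real.exp 0 := by
    intro t
    have := is_const_of_deriv_eq_zero (f := fun s => e s * Real.exp s)
      (fun s => (hF s).differentiableAt) (fun s => (hF s).deriv) t 0
    simpa using this
  have he : ∀ t, e t = e 0 * Real.exp (-t) := by
    intro t
    have h1 := hconst t
    have hexp := Real.exp_ne_zero t
    rw [Real.exp_zero, mul_one] at h1
    rw [Real.exp_neg, ← h1, mul_assoc, mul_inv_cancel₀ hexp, mul_one]
  have : Tendsto (fun t => e 0 * Real.exp (-t)) atTop (𝓝 0) := by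
    simpa using (Real.tendsto_exp_neg_atTop_nhds_zero).const_mul (e 0)
  exact this.congr (fun t => (he t).symm)

/-- Corollary 2(i): if c₁ = c₂ = 0, d₁, d₂ have nonzero entries, and u₃, u₄ are
chosen as prescribed, then the four drive systems achieve dual combination
multi-switching synchronization with w₁' = k₁(w₁) + u₃ and w₂' = k₂(w₂) + u₄. -/
theorem dual_combination_multi_switching_sync_w
    (n : ℕ) (hn : 1 ≤ n)
    (f₁ f₂ g₁ g₂ k₁ k₂ : (Fin n → ℝ) → (Fin n → ℝ))
    (x₁ x₂ y₁ y₂ w₁ w₂ u₃ u₄ : ℝ → Fin n → ℝ)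
    (a₁ a₂ b₁ b₂ c₁ c₂ d₁ d₂ : Fin n → ℝ)
    (i j : Fin n → Fin n)
    (hc₁ : c₁ = 0) (hc₂ : c₂ = 0)
    (hd₁ : ∀ m, d₁ m ≠ 0) (hd₂ : ∀ m, d₂ m ≠ 0)
    (hx₁ : ∀ t m, HasDerivAt (fun s => x₁ s m) (f₁ (x₁ t) m) t)
    (hx₂ : ∀ t m, HasDerivAt (fun s => x₂ s m) (f₂ (x₂ t) m) t)
    (hy₁ : ∀ t m, HasDerivAt (fun s => y₁ s m) (g₁ (y₁ t) m) t)
    (hy₂ : ∀ t m, HasDerivAt (fun s => y₂ s m) (g₂ (y₂ t) m) t)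
    (hw₁ : ∀ t m, HasDerivAt (fun s => w₁ s m) (k₁ (w₁ t) m + u₃ t m) t)
    (hw₂ : ∀ t m, HasDerivAt (fun s => w₂ s m) (k₂ (w₂ t) m + u₄ t m) t)
    (e₁ e₂ : ℝ → Fin n → ℝ)
    (he₁ : ∀ t m, e₁ t m =
      a₁ (i m) * x₁ t (i m) + b₁ (j m) * y₁ t (j m) - d₁ m * w₁ t m)
    (he₂ : ∀ t m, e₂ t m =
      a₂ (i m) * x₂ t (i m) + b₂ (j m) * y₂ t (j m) - d₂ m * w₂ t m)
    (hu₃ : ∀ t m, u₃ t m =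
      (d₁ m)⁻¹ * a₁ (i m) * f₁ (x₁ t) (i m) + (d₁ m)⁻¹ * b₁ (j m) * g₁ (y₁ t) (j m)
        - k₁ (w₁ t) m + (d₁ m)⁻¹ * e₁ t m)
    (hu₄ : ∀ t m, u₄ t m =
      (d₂ m)⁻¹ * a₂ (i m) * f₂ (x₂ t) (i m) + (d₂ m)⁻¹ * b₂ (j m) * g₂ (y₂ t) (j m)
        - k₂ (w₂ t) m + (d₂ m)⁻¹ * e₂ t m) :
    ∀ m : Fin n,
      Tendsto (fun t => e₁ t m) atTop (𝓝 0) ∧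
      Tendsto (fun t => e₂ t m) atTop (𝓝 0) := by
  intro m
  constructor
  · apply tendsto_zero_of_deriv_neg_self
    intro t
    have hD : HasDerivAt (fun s => e₁ s m)
        (a₁ (i m) * f₁ (x₁ t) (i m) + b₁ (j m) * g₁ (y₁ t) (j m)
          - d₁ m * (k₁ (w₁ t) m + u₃ t m)) t := by
      have := (((hx₁ t (i m)).const_mul (a₁ (i m))).add
        ((hy₁ t (j m)).const_mul (b₁ (j m)))).sub ((hw₁ t m).const_mul (d₁ m))
      exact this.congr_of_eventuallyEq (by filter_upwards with s; rw [he₁ s m]; rfl)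
    convert hD using 1
    rw [hu₃ t m, he₁ t m]
    field_simp [hd₁ m]
    ring
  · apply tendsto_zero_of_deriv_neg_self
    intro t
    have hD : HasDerivAt (fun s => e₂ s m)
        (a₂ (i m) * f₂ (x₂ t) (i m) + b₂ (j m) * g₂ (y₂ t) (j m)
          - d₂ m * (k₂ (w₂ t) m + u₄ t m)) t := by
      have := (((hx₂ t (i m)).const_mul (a₂ (i m))).add
        ((hy₂ t (j m)).const_mul (b₂ (j m)))).sub ((hw₂ t m).const_mul (d₂ m))
      exact this.congr_of_eventuallyEq (by filter_upwards with s; rw [he₂ s m]; rfl)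
    convert hD using 1
    rw [hu₄ t m, he₂ t m]
    field_simp [hd₂ m]
    ring
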